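/- Let p be a prime, c ≥ 1, and let ρ : (ℤ/p^cℤ)ˣ → ℂˣ be a homomorphism that is nontrivial on the kernel of the reduction map (ℤ/p^cℤ)ˣ → (ℤ/p^{c−1}ℤ)ˣ (i.e. ρ has conductor exactly c). Let π := Ind_B^J ρ̂. Then dim π = p^{c−1}, and as linear operators on π one has π(e_U)·π(e_V)·π(e_U) = p^{1−c} · π(e_U). -/

import Mathlib

open scoped BigOperators

set_option maxHeartbeats 1000000
set_option synthInstance.maxHeartbeats 1000000

noncomputable section

namespace Parahoric

variable {G : Type*} [Group G]

/-- An Iwahori decomposition of the subgroup `I` of `G` as `I = W·M·W̄`: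
`M` normalizes `W` and `W̄`, and the multiplication map `W × M × W̄ → I` is a bijection. -/
def IwahoriDecomp (I W M Wb : Subgroup G) : Prop :=
  M ≤ Subgroup.normalizer (W : Set G) ∧ M ≤ Subgroup.normalizer (Wb : Set G) ∧
    Set.BijOn (fun q : G × G × G => q.1 * q.2.1 * q.2.2)
      ((W : Set G) ×ˢ (M : Set G) ×ˢ (Wb : Set G)) (I : Set G)

/-- The averaging idempotent `e_H = |H|⁻¹ ∑_{h ∈ H} h` in the group algebra `ℂ[G]`. -/
def algAvg (H : Subgroup G) [Finite H] : MonoidAlgebra ℂ G :=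
  letI : Fintype H := Fintype.ofFinite H
  (Nat.card H : ℂ)⁻¹ • ∑ h : H, MonoidAlgebra.of ℂ G (h : G)

/-- The canonical algebra embedding `ℂ[L] → ℂ[G]` for a subgroup `L ≤ G`. -/
def algMap (L : Subgroup G) : MonoidAlgebra ℂ ↥L →ₐ[ℂ] MonoidAlgebra ℂ G :=
  MonoidAlgebra.mapDomainAlgHom ℂ ℂ L.subtype

/-- `ℂ[G]·e`, the range of right multiplication by `e` on the group algebra. -/
def ralg (G : Type*) [Group G] (e : MonoidAlgebra ℂ G) : Submodule ℂ (MonoidAlgebra ℂ G) :=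
  LinearMap.range (LinearMap.mulRight ℂ e)

section Reps

variable {W W₁ W₂ : Type*} [AddCommGroup W] [Module ℂ W]
  [AddCommGroup W₁] [Module ℂ W₁] [AddCommGroup W₂] [Module ℂ W₂]

/-- A ℂ-submodule is stable under a representation. -/
def Stable (π : Representation ℂ G W) (S : Submodule ℂ W) : Prop :=
  ∀ g : G, ∀ x ∈ S, π g x ∈ S

/-- Irreducibility of a representation (equivalently, simplicity of the corresponding
`ℂ[G]`-module): the space is nonzero and has no nontrivial invariant subspaces. -/
def IsIrreducible (π : Representation ℂ G W) : Prop :=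
  (⊤ : Submodule ℂ W) ≠ ⊥ ∧
    ∀ T : Submodule ℂ W, Stable π T → T = ⊥ ∨ T = ⊤

/-- Irreducibility of an invariant subspace `S` of an ambient representation. -/
def IsIrreducibleSub (π : Representation ℂ G W) (S : Submodule ℂ W) : Prop :=
  S ≠ ⊥ ∧ ∀ T : Submodule ℂ W, T ≤ S → Stable π T → T = ⊥ ∨ T = S

/-- The space `Hom_G(ρ, τ)` of intertwining operators. -/
def repHom (ρ : Representation ℂ G W₁) (τ : Representation ℂ G W₂) :
    Submodule ℂ (W₁ →ₗ[ℂ] W₂) where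
  carrier := {φ | ∀ (g : G) (x : W₁), φ (ρ g x) = τ g (φ x)}
  add_mem' := by
    intro φ ψ hφ hψ g x
    simp [hφ g x, hψ g x]
  zero_mem' := by intro g x; simp
  smul_mem' := by
    intro c φ hφ g x
    simp [hφ g x]

/-- `Hom_G(ρ, τ|_T)` where the target is an invariant subspace `T` of `τ`. -/
def homFullSub (ρ : Representation ℂ G W₁) (τ : Representation ℂ G W₂)
    (T : Submodule ℂ W₂) : Submodule ℂ (W₁ →ₗ[ℂ] ↥T) where
  carrier := {φ | ∀ (g : G) (x : W₁), (φ (ρ g x) : W₂) = τ g ↑(φ x)}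
  add_mem' := by
    intro φ ψ hφ hψ g x
    simp [hφ g x, hψ g x]
  zero_mem' := by intro g x; simp
  smul_mem' := by
    intro c φ hφ g x
    simp [hφ g x]

/-- `Hom_G(ρ|_S, τ)` where the source is an invariant subspace `S` of `ρ`. -/
def homSubFull (ρ : Representation ℂ G W₁) (S : Submodule ℂ W₁)
    (τ : Representation ℂ G W₂) : Submodule ℂ (↥S →ₗ[ℂ] W₂) where
  carrier := {φ | ∀ (g : G) (x : S) (hx : ρ g ↑x ∈ S), φ ⟨ρ g ↑x, hx⟩ = τ g (φ x)}
  add_mem' := by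
    intro φ ψ hφ hψ g x hx
    simp [hφ g x hx, hψ g x hx]
  zero_mem' := by intro g x hx; simp
  smul_mem' := by
    intro c φ hφ g x hx
    simp [hφ g x hx]

/-- `Hom_G(ρ|_S, τ|_T)` between invariant subspaces. -/
def homSubSub (ρ : Representation ℂ G W₁) (S : Submodule ℂ W₁)
    (τ : Representation ℂ G W₂) (T : Submodule ℂ W₂) : Submodule ℂ (↥S →ₗ[ℂ] ↥T) where
  carrier := {φ | ∀ (g : G) (x : S) (hx : ρ g ↑x ∈ S), (φ ⟨ρ g ↑x, hx⟩ : W₂) = τ g ↑(φ x)}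
  add_mem' := by
    intro φ ψ hφ hψ g x hx
    simp [hφ g x hx, hψ g x hx]
  zero_mem' := by intro g x hx; simp
  smul_mem' := by
    intro c φ hφ g x hx
    simp [hφ g x hx]

/-- Isomorphism of representations. -/
def IsoRep (ρ : Representation ℂ G W₁) (τ : Representation ℂ G W₂) : Prop :=
  ∃ e : W₁ ≃ₗ[ℂ] W₂, ∀ (g : G) (x : W₁), e (ρ g x) = τ g (e x)

/-- Equivariant isomorphism from a representation onto an invariant subspace. -/
def IsoFullSub (ρ : Representation ℂ G W₁) (τ : Representation ℂ G W₂)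
    (T : Submodule ℂ W₂) : Prop :=
  ∃ e : W₁ ≃ₗ[ℂ] ↥T, ∀ (g : G) (x : W₁), (e (ρ g x) : W₂) = τ g ↑(e x)

/-- Equivariant isomorphism from an invariant subspace onto a representation. -/
def IsoSubFull (ρ : Representation ℂ G W₁) (S : Submodule ℂ W₁)
    (τ : Representation ℂ G W₂) : Prop :=
  ∃ e : ↥S ≃ₗ[ℂ] W₂, ∀ (g : G) (x : S) (hx : ρ g ↑x ∈ S), e ⟨ρ g ↑x, hx⟩ = τ g (e x)

/-- Equivariant isomorphism between invariant subspaces. -/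
def IsoSubSub (ρ : Representation ℂ G W₁) (S : Submodule ℂ W₁)
    (τ : Representation ℂ G W₂) (T : Submodule ℂ W₂) : Prop :=
  ∃ e : ↥S ≃ₗ[ℂ] ↥T, ∀ (g : G) (x : S) (hx : ρ g ↑x ∈ S),
    (e ⟨ρ g ↑x, hx⟩ : W₂) = τ g ↑(e x)

/-- The operator `π(e_H) = |H|⁻¹ ∑_{h ∈ H} π(h)`. -/
def avgMap (π : Representation ℂ G W) (H : Subgroup G) [Finite H] : W →ₗ[ℂ] W :=
  letI : Fintype H := Fintype.ofFinite H
  (Nat.card H : ℂ)⁻¹ • ∑ h : H, π (h : G)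

/-- The subspace `W^H` of `H`-fixed vectors. -/
def fixedSub (π : Representation ℂ G W) (H : Subgroup G) : Submodule ℂ W where
  carrier := {w | ∀ h ∈ H, π h w = w}
  add_mem' := by
    intro a b ha hb h hh
    simp [ha h hh, hb h hh]
  zero_mem' := by intro h hh; simp
  smul_mem' := by
    intro c a ha h hh
    simp [ha h hh]

/-- Restriction of a representation to a subgroup. -/
def resRep (π : Representation ℂ G W) (L : Subgroup G) : Representation ℂ ↥L W :=
  π.comp L.subtype

/-- The right-translation representation of `G` on the function space `G → W`. -/
def rtRep (G : Type*) [Group G] (W : Type*) [AddCommGroup W] [Module ℂ W] :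
    Representation ℂ G (G → W) where
  toFun g :=
    { toFun := fun f x => f (x * g)
      map_add' := fun _ _ => rfl
      map_smul' := fun _ _ => rfl }
  map_one' := LinearMap.ext fun f => funext fun x => by simp
  map_mul' := fun g₁ g₂ => LinearMap.ext fun f => funext fun x => by
    simp [mul_assoc]

/-- The left-translation representation of `G` on the function space `G → W`. -/
def ltRep (G : Type*) [Group G] (W : Type*) [AddCommGroup W] [Module ℂ W] :
    Representation ℂ G (G → W) where
  toFun g :=
    { toFun := fun f x => f (g⁻¹ * x)
      map_add' := fun _ _ => rfl
      map_smul' := fun _ _ => rfl }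
  map_one' := LinearMap.ext fun f => funext fun x => by simp
  map_mul' := fun g₁ g₂ => LinearMap.ext fun f => funext fun x => by
    simp [mul_assoc]

/-- Left translation by a fixed group element, as a linear operator on `G → W`. -/
def lTrans (W : Type*) [AddCommGroup W] [Module ℂ W] (g : G) : (G → W) →ₗ[ℂ] (G → W) where
  toFun f := fun x => f (g * x)
  map_add' := fun _ _ => rfl
  map_smul' := fun _ _ => rfl

/-- The averaging operator `I_U : f ↦ (j ↦ |U|⁻¹ ∑_{u ∈ U} f(u·j))` on `G → W`. -/
def avgL (U : Subgroup G) [Finite U] (W : Type*) [AddCommGroup W] [Module ℂ W] :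
    (G → W) →ₗ[ℂ] (G → W) :=
  letI : Fintype U := Fintype.ofFinite U
  (Nat.card U : ℂ)⁻¹ • ∑ u : U, lTrans W (u : G)

/-- The module `Ind_{LU}^G (infl_L^{LU} ρ)` of functions `f : G → W` with
`f(u·l·g) = ρ(l)·f(g)` for `u ∈ U`, `l ∈ L`; `G` acts by right translation (`rtRep`).
This is the standard concrete model of `ℂ[G]·e_U ⊗_{ℂ[L]} ρ`. -/
def indInfl (U L : Subgroup G) {W : Type*} [AddCommGroup W] [Module ℂ W]
    (ρ : Representation ℂ ↥L W) : Submodule ℂ (G → W) where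
  carrier := {f | ∀ (u l g : G) (hu : u ∈ U) (hl : l ∈ L),
    f (u * l * g) = ρ ⟨l, hl⟩ (f g)}
  add_mem' := by
    intro f₁ f₂ h₁ h₂ u l g hu hl
    simp [h₁ u l g hu hl, h₂ u l g hu hl]
  zero_mem' := by intro u l g hu hl; simp
  smul_mem' := by
    intro c f hf u l g hu hl
    simp [hf u l g hu hl]

/-- Parahoric induction `i_{U,V} ρ = ℂ[G]e_V e_U ⊗_{ℂ[L]} ρ`, realized concretely as the
image of the averaging operator `I_U` on `Ind_{LV}^G (infl ρ)`; `G` acts by `rtRep`. -/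
def parInd (U L V : Subgroup G) [Finite U] {W : Type*} [AddCommGroup W] [Module ℂ W]
    (ρ : Representation ℂ ↥L W) : Submodule ℂ (G → W) :=
  (indInfl V L ρ).map (avgL U W)

/-- Parahoric restriction `r_{U,V} π`: the image of the operator `π(e_U)·π(e_V)`. -/
def parRes (π : Representation ℂ G W) (U V : Subgroup G) [Finite U] [Finite V] :
    Submodule ℂ W :=
  LinearMap.range (avgMap π U ∘ₗ avgMap π V)

/-- Conjugation `l ↦ w·l·w⁻¹` as an endomorphism of a subgroup `L` normalized by `w`. -/
def conjHom (L : Subgroup G) (w : G) (hw : ∀ l ∈ L, w * l * w⁻¹ ∈ L) : ↥L →* ↥L where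
  toFun l := ⟨w * ↑l * w⁻¹, hw ↑l l.2⟩
  map_one' := by ext; simp
  map_mul' := fun a b => by ext; simp [mul_assoc]

/-- External direct sum of two representations of the same group. -/
def pairRep (ρ : Representation ℂ G W₁) (τ : Representation ℂ G W₂) :
    Representation ℂ G (W₁ × W₂) where
  toFun g := (ρ g).prodMap (τ g)
  map_one' := by ext x <;> simp
  map_mul' := fun g₁ g₂ => by ext x <;> simp

/-- The induced module `ℂ[G] ⊗_{ℂ[J]} W` (for `J ≤ G` of finite index this is all of the
induced module; in general, its "compactly induced" variant is `cInd`): functions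
`f : G → W` with `f(g·j) = π(j)⁻¹ f(g)`, the action of `G` being left translation. -/
def indUp (J : Subgroup G) {W : Type*} [AddCommGroup W] [Module ℂ W]
    (π : Representation ℂ ↥J W) : Submodule ℂ (G → W) where
  carrier := {f | ∀ (g : G) (j : ↥J), f (g * ↑j) = π j⁻¹ (f g)}
  add_mem' := by
    intro f₁ f₂ h₁ h₂ g j
    simp [h₁ g j, h₂ g j]
  zero_mem' := by intro g j; simp
  smul_mem' := by
    intro c f hf g j
    simp [hf g j]

/-- The induced module `ℂ[G] ⊗_{ℂ[J]} W` for an arbitrary subgroup `J` of a (possibly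
infinite) group `G`: functions `f : G → W` with `f(g·j) = π(j)⁻¹ f(g)` supported on
finitely many cosets `g·J`; the action of `G` is left translation (`ltRep`). -/
def cInd (J : Subgroup G) {W : Type*} [AddCommGroup W] [Module ℂ W]
    (π : Representation ℂ ↥J W) : Submodule ℂ (G → W) where
  carrier := {f | (∀ (g : G) (j : ↥J), f (g * ↑j) = π j⁻¹ (f g)) ∧
    ∃ S : Set G, S.Finite ∧ ∀ g : G, f g ≠ 0 → ∃ s ∈ S, ∃ j : ↥J, g = s * ↑j}
  add_mem' := by
    rintro f₁ f₂ ⟨h₁, S₁, hS₁, hS₁'⟩ ⟨h₂, S₂, hS₂, hS₂'⟩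
    refine ⟨fun g j => by simp [h₁ g j, h₂ g j], S₁ ∪ S₂, hS₁.union hS₂, fun g hg => ?_⟩
    by_cases hf₁ : f₁ g = 0
    · have hf₂ : f₂ g ≠ 0 := by
        intro h
        exact hg (by simp [Pi.add_apply, hf₁, h])
      obtain ⟨s, hs, j, hj⟩ := hS₂' g hf₂
      exact ⟨s, Set.mem_union_right _ hs, j, hj⟩
    · obtain ⟨s, hs, j, hj⟩ := hS₁' g hf₁
      exact ⟨s, Set.mem_union_left _ hs, j, hj⟩
  zero_mem' := by
    refine ⟨fun g j => by simp, ∅, Set.finite_empty, fun g hg => absurd rfl hg⟩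
  smul_mem' := by
    rintro c f ⟨h, S, hS, hS'⟩
    refine ⟨fun g j => by simp [h g j], S, hS, fun g hg => ?_⟩
    apply hS'
    intro h0
    exact hg (by simp [Pi.smul_apply, h0])

/-- The space of functions `f : J → ℂ` with `f(b·g) = χ(b)·f(g)`: the concrete model of the
induced representation `Ind_B^J χ` of a one-dimensional character, `J` acting by `rtRep`. -/
def indChar {J : Type*} [Group J] (B : Subgroup J) (χ : ↥B →* ℂˣ) :
    Submodule ℂ (J → ℂ) where
  carrier := {f | ∀ (b : ↥B) (g : J), f (↑b * g) = (χ b : ℂ) * f g}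
  add_mem' := by
    intro f₁ f₂ h₁ h₂ b g
    simp [h₁ b g, h₂ b g, mul_add]
  zero_mem' := by intro b g; simp
  smul_mem' := by
    intro c f hf b g
    simp [hf b g]
    ring

/-- The space `Hom_{J ∩ t⁻¹Jt}(π, π^t)` of linear maps `φ` with
`φ ∘ π(x) = π(t·x·t⁻¹) ∘ φ` for all `x ∈ J ∩ t⁻¹Jt`. -/
def twistedIntertwiners {W : Type*} [AddCommGroup W] [Module ℂ W]
    (J : Subgroup G) (π : Representation ℂ ↥J W) (t : G) :
    Submodule ℂ (W →ₗ[ℂ] W) where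
  carrier := {φ | ∀ (x : G) (hx : x ∈ J) (hx' : t * x * t⁻¹ ∈ J),
    φ ∘ₗ π ⟨x, hx⟩ = π ⟨t * x * t⁻¹, hx'⟩ ∘ₗ φ}
  add_mem' := by
    intro φ ψ hφ hψ x hx hx'
    simp only [LinearMap.add_comp, LinearMap.comp_add, hφ x hx hx', hψ x hx hx']
  zero_mem' := by intro x hx hx'; simp
  smul_mem' := by
    intro c φ hφ x hx hx'
    simp only [LinearMap.smul_comp, LinearMap.comp_smul, hφ x hx hx']

/-- The dimension `dim_ℂ S` of a subspace `S` (e.g. of a space of intertwining maps). -/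
def dimC {M : Type*} [AddCommGroup M] [Module ℂ M] (S : Submodule ℂ M) : ℕ :=
  Module.finrank ℂ ↥S

/-- Finite-dimensionality of a subspace over `ℂ`. -/
def IsFinDimSub {M : Type*} [AddCommGroup M] [Module ℂ M] (S : Submodule ℂ M) : Prop :=
  FiniteDimensional ℂ ↥S

end Reps

section Statement12

open Matrix

/-!
Inside the Iwahori subgroup `J` every element factors uniquely as `b * v` with `b ∈ B` and
`v ∈ V`, so a vector of `Ind_B^J ρ̂` is determined by its restriction to `V`; this gives
`dim = |V| = p^(c-1)`.

A right `U`-invariant vector `F` vanishes on `V \ {1}`: for `v = [[1,0],[t,1]]` with `t ≠ 0` one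
finds `u ∈ U` with `v * u = b * v`, where `b ∈ B` has `(0,0)` entry an element of the kernel of
reduction mod `p^(c-1)` on which `ρ` is nontrivial, so `F v = ρ̂ b * F v`. Both `π(e_U) f` and
`π(e_U) π(e_V) π(e_U) f` are such vectors, hence determined by their value at `1`, and there the
second is `|V|⁻¹` times the first because `ρ̂` is trivial on `U ≤ B`.
-/

section InducedCharacter

variable {W : Type*} [AddCommGroup W] [Module ℂ W]

theorem avgMap_mem_fixedSub (π : Representation ℂ G W) (H : Subgroup G) [Finite H] (w : W) :
    avgMap π H w ∈ fixedSub π H := by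
  let : Fintype H := Fintype.ofFinite H
  intro h hh
  simp only [avgMap, LinearMap.smul_apply, LinearMap.sum_apply, map_smul, map_sum,
    ← Module.End.mul_apply, ← map_mul]
  congr 1
  exact Fintype.sum_equiv (Equiv.mulLeft ⟨h, hh⟩) _ _ fun _ => rfl

theorem Stable.avgMap_mem {π : Representation ℂ G W} {S : Submodule ℂ W} (hS : Stable π S)
    (H : Subgroup G) [Finite H] {w : W} (hw : w ∈ S) : avgMap π H w ∈ S := by
  let : Fintype H := Fintype.ofFinite H
  simp only [avgMap, LinearMap.smul_apply, LinearMap.sum_apply]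
  exact S.smul_mem _ (S.sum_mem fun h _ => hS h w hw)

theorem stable_indChar {B : Subgroup G} (χ : B →* ℂˣ) :
    Stable (rtRep G ℂ) (indChar B χ) := by
  intro g f hf b x
  show f (b * x * g) = χ b * f (x * g)
  rw [mul_assoc]
  exact hf b (x * g)

theorem avgMap_rtRep_apply (H : Subgroup G) [Fintype H] (f : G → ℂ) (x : G) :
    avgMap (rtRep G ℂ) H f x = (Nat.card H : ℂ)⁻¹ * ∑ h : H, f (x * h) := by
  simp only [avgMap, LinearMap.smul_apply, LinearMap.sum_apply, Pi.smul_apply, smul_eq_mul,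
    Finset.sum_apply]
  congr
  exact Subsingleton.elim _ _

variable {B V : Subgroup G} {χ : B →* ℂˣ}

theorem apply_eq_of_mem_indChar (hBV : B.IsComplement' V) {f : G → ℂ} (hf : f ∈ indChar B χ)
    (g : G) : f g = χ (hBV.equiv g).1 * f (hBV.equiv g).2 := by
  conv_lhs => rw [← hBV.equiv_fst_mul_equiv_snd g]
  exact hf _ _

theorem indChar_ext (hBV : B.IsComplement' V) {f f' : G → ℂ} (hf : f ∈ indChar B χ)
    (hf' : f' ∈ indChar B χ) (h : ∀ v ∈ V, f v = f' v) : f = f' := by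
  funext g
  rw [apply_eq_of_mem_indChar hBV hf, apply_eq_of_mem_indChar hBV hf', h _ (hBV.equiv g).2.2]

def indCharEquiv (hBV : B.IsComplement' V) : indChar B χ ≃ₗ[ℂ] (V → ℂ) where
  toFun f v := f.1 v
  map_add' _ _ := rfl
  map_smul' _ _ := rfl
  invFun ψ := ⟨fun g => χ (hBV.equiv g).1 * ψ (hBV.equiv g).2, fun b g => by
    simp only [hBV.equiv_mul_left, map_mul, Units.val_mul, mul_assoc]⟩
  left_inv f := Subtype.ext (funext fun g => (apply_eq_of_mem_indChar hBV f.2 g).symm)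
  right_inv ψ := funext fun v => by
    change χ (hBV.equiv v).1 * ψ (hBV.equiv v).2 = ψ v
    rw [hBV.equiv_snd_eq_self_of_mem_of_one_mem B.one_mem v.2,
      hBV.equiv_fst_eq_one_of_mem_of_one_mem B.one_mem v.2,
      show χ ⟨1, B.one_mem⟩ = 1 from map_one χ, Units.val_one, one_mul]
    rfl

theorem finrank_indChar [Finite V] (hBV : B.IsComplement' V) :
    Module.finrank ℂ (indChar B χ) = Nat.card V := by
  let : Fintype V := Fintype.ofFinite V
  rw [(indCharEquiv hBV).finrank_eq, Module.finrank_fintype_fun_eq_card,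
    Nat.card_eq_fintype_card]

theorem apply_eq_zero_of_mem_indChar {U : Subgroup G} {f : G → ℂ} (hf : f ∈ indChar B χ)
    (hfU : f ∈ fixedSub (rtRep G ℂ) U) {u v : G} (hu : u ∈ U) (b : B) (hvu : v * u = b * v)
    (hb : χ b ≠ 1) : f v = 0 := by
  have h : (χ b : ℂ) * f v = f v := by
    rw [← hf, ← hvu]
    exact congrFun (hfU u hu) v
  exact (mul_left_eq_self₀.mp h).resolve_left (Units.val_eq_one.not.mpr hb)

theorem avgMap_rtRep_apply_one_of_le_ker {U : Subgroup G} [Finite U] (hUB : U ≤ B)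
    (hχU : U.subgroupOf B ≤ χ.ker) {f : G → ℂ} (hf : f ∈ indChar B χ) :
    avgMap (rtRep G ℂ) U f 1 = f 1 := by
  let : Fintype U := Fintype.ofFinite U
  have hterm (u : U) : f (1 * u) = f 1 := by
    have hu : (⟨u, hUB u.2⟩ : B) ∈ χ.ker := hχU u.2
    rw [one_mul, ← mul_one (u : G), show (u : G) = (⟨u, hUB u.2⟩ : B) from rfl, hf,
      MonoidHom.mem_ker.mp hu, Units.val_one, one_mul]
  rw [avgMap_rtRep_apply, Finset.sum_congr rfl fun u _ => hterm u, Finset.sum_const,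
    Finset.card_univ, ← Nat.card_eq_fintype_card, nsmul_eq_mul, inv_mul_cancel_left₀]
  exact Nat.cast_ne_zero.mpr Nat.card_pos.ne'

theorem avgMap_rtRep_apply_one_of_eq_zero (H : Subgroup G) [Finite H] {f : G → ℂ}
    (hf : ∀ h ∈ H, h ≠ 1 → f h = 0) :
    avgMap (rtRep G ℂ) H f 1 = (Nat.card H : ℂ)⁻¹ * f 1 := by
  let : Fintype H := Fintype.ofFinite H
  rw [avgMap_rtRep_apply, Fintype.sum_eq_single 1 fun h hh => by
    rw [one_mul]; exact hf h h.2 fun h1 => hh (Subtype.ext h1)]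
  simp

theorem avgMap_avgMap_avgMap_eq_inv_card_smul {U : Subgroup G} [Finite U] [Finite V]
    (hBV : B.IsComplement' V) (hUB : U ≤ B) (hχU : U.subgroupOf B ≤ χ.ker)
    (hcond : ∀ v ∈ V, v ≠ 1 → ∃ u ∈ U, ∃ b : B, v * u = b * v ∧ χ b ≠ 1)
    {f : G → ℂ} (hf : f ∈ indChar B χ) :
    avgMap (rtRep G ℂ) U (avgMap (rtRep G ℂ) V (avgMap (rtRep G ℂ) U f)) =
      (Nat.card V : ℂ)⁻¹ • avgMap (rtRep G ℂ) U f := by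
  have hS := stable_indChar χ
  have hvanish {F : G → ℂ} (hF : F ∈ indChar B χ) (hFU : F ∈ fixedSub (rtRep G ℂ) U)
      (v : G) (hv : v ∈ V) (hv1 : v ≠ 1) : F v = 0 := by
    obtain ⟨u, hu, b, hvu, hb⟩ := hcond v hv hv1
    exact apply_eq_zero_of_mem_indChar hF hFU hu b hvu hb
  set F := avgMap (rtRep G ℂ) U f
  have hF : F ∈ indChar B χ := hS.avgMap_mem U hf
  have hVF : avgMap (rtRep G ℂ) V F ∈ indChar B χ := hS.avgMap_mem V hF
  refine indChar_ext hBV (hS.avgMap_mem U hVF) ((indChar B χ).smul_mem _ hF) fun v hv => ?_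
  rcases eq_or_ne v 1 with rfl | hv1
  · rw [avgMap_rtRep_apply_one_of_le_ker hUB hχU hVF,
      avgMap_rtRep_apply_one_of_eq_zero V (hvanish hF (avgMap_mem_fixedSub _ U f)),
      Pi.smul_apply, smul_eq_mul]
  · rw [Pi.smul_apply, hvanish hF (avgMap_mem_fixedSub _ U f) v hv hv1,
      hvanish (hS.avgMap_mem U hVF) (avgMap_mem_fixedSub _ U _) v hv hv1, smul_zero]

end InducedCharacter

open scoped MatrixGroups

section SL2

variable {R : Type*} [CommRing R]

def lowerUnipotent (t : R) : SL(2, R) :=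
  ⟨!![1, 0; t, 1], by simp [Matrix.det_fin_two]⟩

def upperUnipotent (s : R) : SL(2, R) :=
  ⟨!![1, s; 0, 1], by simp [Matrix.det_fin_two]⟩

@[simp]
theorem coe_lowerUnipotent (t : R) :
    (lowerUnipotent t : Matrix (Fin 2) (Fin 2) R) = !![1, 0; t, 1] :=
  rfl

@[simp]
theorem coe_upperUnipotent (s : R) :
    (upperUnipotent s : Matrix (Fin 2) (Fin 2) R) = !![1, s; 0, 1] :=
  rfl

theorem lowerUnipotent_inv (t : R) : (lowerUnipotent t)⁻¹ = lowerUnipotent (-t) := by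
  ext i j
  fin_cases i <;> fin_cases j <;>
    simp [Matrix.SpecialLinearGroup.coe_inv, Matrix.adjugate_fin_two]

theorem mul_lowerUnipotent_one_zero (g : SL(2, R)) (t : R) :
    (g * lowerUnipotent t) 1 0 = g 1 0 + g 1 1 * t := by
  simp [Matrix.mul_apply, Fin.sum_univ_two]

theorem lowerUnipotent_mul_upperUnipotent_mul_lowerUnipotent_neg (t s : R) :
    ((lowerUnipotent t * upperUnipotent s * lowerUnipotent (-t) : SL(2, R)) :
      Matrix (Fin 2) (Fin 2) R) =
      !![1 - s * t, s; -(t * t * s), 1 + s * t] := by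
  ext i j
  fin_cases i <;> fin_cases j <;>
    simp [Matrix.mul_apply, Fin.sum_univ_two] <;> ring

theorem isUnit_one_one_of_isNilpotent (g : SL(2, R)) (h : IsNilpotent (g 1 0)) :
    IsUnit (g 1 1) := by
  have hdet : g 0 0 * g 1 1 = 1 + g 0 1 * g 1 0 := by
    have := g.det_coe
    rw [Matrix.det_fin_two] at this
    linear_combination this
  exact isUnit_of_mul_isUnit_right
    (hdet ▸ ((Commute.all _ _).isNilpotent_mul_left h).isUnit_one_add)

end SL2

theorem ZMod.exists_eq_one_add_mul_of_mem_ker_unitsMap {m n : ℕ} [NeZero n] (hmn : m ∣ n)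
    {x : (ZMod n)ˣ} (hx : x ∈ (ZMod.unitsMap hmn).ker) :
    ∃ w : ZMod n, (x : ZMod n) = 1 + m * w := by
  set z := (x : ZMod n) - 1
  have hz : ((z.val : ℕ) : ZMod m) = 0 := by
    have h := congrArg Units.val (MonoidHom.mem_ker.mp hx)
    rw [ZMod.unitsMap_def, Units.coe_map, Units.val_one] at h
    rw [← ZMod.cast_eq_val, ← ZMod.castHom_apply (h := hmn), map_sub, map_one]
    simpa using sub_eq_zero.mpr h
  obtain ⟨w, hw⟩ := (ZMod.natCast_eq_zero_iff _ _).mp hz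
  refine ⟨w, ?_⟩
  rw [← sub_eq_iff_eq_add']
  change z = _
  rw [← ZMod.natCast_zmod_val z, hw, Nat.cast_mul]

theorem ZMod.exists_mul_eq_pow_pred {p c : ℕ} [Fact p.Prime] {t : ZMod (p ^ c)} (ht : t ≠ 0) :
    ∃ s, t * s = (p : ZMod (p ^ c)) ^ (c - 1) := by
  obtain ⟨k, hkc, hk⟩ := (Nat.dvd_prime_pow Fact.out).mp (Nat.gcd_dvd_right t.val (p ^ c))
  have hkc' : k < c := by
    refine hkc.lt_of_ne fun hk' => ht ?_
    have : p ^ c ∣ t.val := by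
      have h := Nat.gcd_dvd_left t.val (p ^ c)
      rwa [hk, hk'] at h
    rw [← ZMod.natCast_zmod_val t, (ZMod.natCast_eq_zero_iff _ _).mpr this]
  refine ⟨t⁻¹ * p ^ (c - 1 - k), ?_⟩
  rw [← mul_assoc, ZMod.mul_inv_eq_gcd, hk, Nat.cast_pow, ← pow_add]
  congr 1
  omega

theorem ZMod.card_multiples {m n : ℕ} [NeZero n] (hmn : m ∣ n) :
    Nat.card {t : ZMod n // ∃ y, t = m * y} = n / m := by
  have e : {t : ZMod n // ∃ y, t = m * y} ≃ AddSubgroup.zmultiples (m : ZMod n) :=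
    Equiv.subtypeEquivRight fun t => by
      simp only [AddSubgroup.mem_zmultiples_iff, zsmul_eq_mul]
      constructor
      · rintro ⟨y, rfl⟩
        exact ⟨y.val, by rw [Int.cast_natCast, ZMod.natCast_zmod_val, mul_comm]⟩
      · rintro ⟨k, rfl⟩
        exact ⟨k, mul_comm _ _⟩
  rw [Nat.card_congr e, Nat.card_zmultiples, ZMod.addOrderOf_coe _ (NeZero.ne n),
    Nat.gcd_eq_right hmn]

theorem ZMod.exists_one_sub_mul_eq_of_mem_ker_unitsMap {p c : ℕ} [Fact p.Prime] (hc : 1 ≤ c)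
    {t : ZMod (p ^ c)} (ht : t ≠ 0) (htp : ∃ y, t = p * y) {x : (ZMod (p ^ c))ˣ}
    (hx : x ∈ (ZMod.unitsMap (pow_dvd_pow p (Nat.sub_le c 1))).ker) :
    ∃ s, t * t * s = 0 ∧ 1 - s * t = x := by
  obtain ⟨s, hs⟩ := ZMod.exists_mul_eq_pow_pred ht
  obtain ⟨w, hw⟩ := ZMod.exists_eq_one_add_mul_of_mem_ker_unitsMap _ hx
  obtain ⟨y, rfl⟩ := htp
  have hpc : (p : ZMod (p ^ c)) * p ^ (c - 1) = 0 := by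
    rw [← pow_succ', Nat.sub_add_cancel hc]
    exact_mod_cast ZMod.natCast_self (p ^ c)
  refine ⟨-(s * w), ?_, ?_⟩
  · linear_combination (-(y * w)) * hpc + (-(p * y * w)) * hs
  · rw [hw, Nat.cast_pow]
    linear_combination w * hs

section Iwahori

variable {R : Type*} [CommRing R] {B J U V : Subgroup SL(2, R)}

theorem isComplement'_subgroupOf_iwahori {ϖ : R} (hϖ : IsNilpotent ϖ)
    (hB : ∀ g : SL(2, R), g ∈ B ↔ g 1 0 = 0)
    (hJ : ∀ g : SL(2, R), g ∈ J ↔ ∃ x : R, g 1 0 = ϖ * x)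
    (hV : ∀ g : SL(2, R), g ∈ V ↔
      ∃ t : R, (∃ y, t = ϖ * y) ∧ (g : Matrix (Fin 2) (Fin 2) R) = !![1, 0; t, 1])
    (hBJ : B ≤ J) (hVJ : V ≤ J) :
    (B.subgroupOf J).IsComplement' (V.subgroupOf J) := by
  refine Subgroup.isComplement'_of_disjoint_and_mul_eq_univ ?_ ?_
  · refine Subgroup.disjoint_def.mpr fun {j} hjB hjV => ?_
    obtain ⟨t, -, hjt⟩ := (hV j).mp hjV
    have ht : t = 0 := by simpa [hjt] using (hB j).mp hjB
    refine Subtype.ext (Subtype.ext ?_)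
    rw [hjt, ht]
    exact Matrix.one_fin_two.symm
  · refine Set.eq_univ_of_forall fun j => ?_
    obtain ⟨x, hx⟩ := (hJ j).mp j.2
    have hnil : IsNilpotent ((j : SL(2, R)) 1 0) := by
      rw [hx]
      exact (Commute.all _ _).isNilpotent_mul_right hϖ
    obtain ⟨u, hu⟩ := isUnit_one_one_of_isNilpotent _ hnil
    set t := (j : SL(2, R)) 1 0 * ↑u⁻¹
    have hv : lowerUnipotent t ∈ V :=
      (hV _).mpr ⟨t, ⟨x * ↑u⁻¹, by rw [← mul_assoc, ← hx]⟩, rfl⟩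
    have hb : (j : SL(2, R)) * (lowerUnipotent t)⁻¹ ∈ B := by
      rw [hB, lowerUnipotent_inv, mul_lowerUnipotent_one_zero, ← hu, mul_neg, mul_left_comm,
        Units.mul_inv, mul_one, add_neg_cancel]
    exact Set.mem_mul.mpr
      ⟨⟨_, hBJ hb⟩, hb, ⟨_, hVJ hv⟩, hv, Subtype.ext (inv_mul_cancel_right _ _)⟩

theorem upper_le_borel (hB : ∀ g : SL(2, R), g ∈ B ↔ g 1 0 = 0)
    (hU : ∀ g : SL(2, R), g ∈ U ↔ ∃ s, (g : Matrix (Fin 2) (Fin 2) R) = !![1, s; 0, 1]) :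
    U ≤ B := by
  intro g hg
  obtain ⟨s, hgs⟩ := (hU g).mp hg
  simp [hB, hgs]

variable {ρ : Rˣ →* ℂˣ} {χ : B.subgroupOf J →* ℂˣ}

theorem subgroupOf_upper_le_ker
    (hU : ∀ g : SL(2, R), g ∈ U ↔ ∃ s, (g : Matrix (Fin 2) (Fin 2) R) = !![1, s; 0, 1])
    (hχ : ∀ (b : B.subgroupOf J) (a : Rˣ), (b : SL(2, R)) 0 0 = a → χ b = ρ a) :
    (U.subgroupOf J).subgroupOf (B.subgroupOf J) ≤ χ.ker := by
  intro b hb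
  obtain ⟨s, hbs⟩ := (hU _).mp hb
  simp only [Subgroup.coe_subtype] at hbs
  rw [MonoidHom.mem_ker, hχ b 1 (by simp [hbs]), map_one]

end Iwahori

section IwahoriZMod

variable {p c : ℕ} [Fact p.Prime] {B J U V : Subgroup SL(2, ZMod (p ^ c))}

theorem card_subgroupOf_lower (hc : 1 ≤ c)
    (hV : ∀ g : SL(2, ZMod (p ^ c)), g ∈ V ↔ ∃ t : ZMod (p ^ c), (∃ y, t = p * y) ∧
      (g : Matrix (Fin 2) (Fin 2) (ZMod (p ^ c))) = !![1, 0; t, 1])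
    (hVJ : V ≤ J) : Nat.card (V.subgroupOf J) = p ^ (c - 1) := by
  let e : V ≃ {t : ZMod (p ^ c) // ∃ y, t = p * y} :=
    { toFun g := ⟨(g : SL(2, ZMod (p ^ c))) 1 0, by
        obtain ⟨t, ht, hg⟩ := (hV g).mp g.2
        simpa [hg] using ht⟩
      invFun t := ⟨lowerUnipotent t, (hV _).mpr ⟨t, t.2, rfl⟩⟩
      left_inv g := by
        obtain ⟨t, -, hg⟩ := (hV g).mp g.2
        refine Subtype.ext (Subtype.ext ?_)
        simp [hg]
      right_inv t := rfl }
  rw [Nat.card_congr ((Subgroup.subgroupOfEquivOfLe hVJ).toEquiv.trans e),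
    ZMod.card_multiples (dvd_pow_self p (by omega))]
  exact Nat.div_eq_of_eq_mul_left (Fact.out : p.Prime).pos
    (by rw [← pow_succ, Nat.sub_add_cancel hc])

variable {ρ : (ZMod (p ^ c))ˣ →* ℂˣ} {χ : B.subgroupOf J →* ℂˣ}

theorem exists_upper_mul_eq_borel_mul (hc : 1 ≤ c)
    (hB : ∀ g : SL(2, ZMod (p ^ c)), g ∈ B ↔ g 1 0 = 0)
    (hU : ∀ g : SL(2, ZMod (p ^ c)), g ∈ U ↔
      ∃ s, (g : Matrix (Fin 2) (Fin 2) (ZMod (p ^ c))) = !![1, s; 0, 1])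
    (hV : ∀ g : SL(2, ZMod (p ^ c)), g ∈ V ↔ ∃ t : ZMod (p ^ c), (∃ y, t = p * y) ∧
      (g : Matrix (Fin 2) (Fin 2) (ZMod (p ^ c))) = !![1, 0; t, 1])
    (hUJ : U ≤ J)
    (hρ : ∃ x ∈ (ZMod.unitsMap (pow_dvd_pow p (Nat.sub_le c 1))).ker, ρ x ≠ 1)
    (hχ : ∀ (b : B.subgroupOf J) (a : (ZMod (p ^ c))ˣ),
      (b : SL(2, ZMod (p ^ c))) 0 0 = a → χ b = ρ a)
    (v : J) (hv : v ∈ V.subgroupOf J) (hv1 : v ≠ 1) :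
    ∃ u ∈ U.subgroupOf J, ∃ b : B.subgroupOf J, v * u = b * v ∧ χ b ≠ 1 := by
  obtain ⟨t, htp, hvt⟩ := (hV v).mp hv
  have hv' : (v : SL(2, ZMod (p ^ c))) = lowerUnipotent t := Subtype.ext hvt
  have ht : t ≠ 0 := by
    rintro rfl
    refine hv1 (Subtype.ext (Subtype.ext ?_))
    rw [hvt]
    exact Matrix.one_fin_two.symm
  obtain ⟨x, hx, hρx⟩ := hρ
  obtain ⟨s, htts, hst⟩ := ZMod.exists_one_sub_mul_eq_of_mem_ker_unitsMap hc ht htp hx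
  have hu : upperUnipotent s ∈ U := (hU _).mpr ⟨s, rfl⟩
  set u : J := ⟨_, hUJ hu⟩
  have hvuv : ((v * u * v⁻¹ : J) : Matrix (Fin 2) (Fin 2) (ZMod (p ^ c))) =
      !![(x : ZMod (p ^ c)), s; 0, 1 + s * t] := by
    rw [Subgroup.coe_mul, Subgroup.coe_mul, Subgroup.coe_inv, hv', lowerUnipotent_inv,
      show (u : SL(2, ZMod (p ^ c))) = upperUnipotent s from rfl,
      lowerUnipotent_mul_upperUnipotent_mul_lowerUnipotent_neg, htts, hst, neg_zero]
  have hb : ((v * u * v⁻¹ : J) : SL(2, ZMod (p ^ c))) ∈ B := (hB _).mpr (by rw [hvuv]; simp)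
  refine ⟨u, hu, ⟨_, hb⟩, (inv_mul_cancel_right _ _).symm, ?_⟩
  rwa [hχ _ x (by rw [hvuv]; simp)]

end IwahoriZMod

theorem indChar_dim_and_avg_identity_general
    (p c : ℕ) [Fact p.Prime] (hc : 1 ≤ c)
    (ρ : (ZMod (p ^ c))ˣ →* ℂˣ)
    (hρ : ∃ x ∈ (ZMod.unitsMap (pow_dvd_pow p (Nat.sub_le c 1))).ker, ρ x ≠ 1)
    (B Jsub U V : Subgroup (Matrix.SpecialLinearGroup (Fin 2) (ZMod (p ^ c))))
    (hB : (B : Set (Matrix.SpecialLinearGroup (Fin 2) (ZMod (p ^ c)))) =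
      {g : Matrix.SpecialLinearGroup (Fin 2) (ZMod (p ^ c)) |
        (↑g : Matrix (Fin 2) (Fin 2) (ZMod (p ^ c))) 1 0 = 0})
    (hJ : (Jsub : Set (Matrix.SpecialLinearGroup (Fin 2) (ZMod (p ^ c)))) =
      {g : Matrix.SpecialLinearGroup (Fin 2) (ZMod (p ^ c)) | ∃ x : ZMod (p ^ c),
        (↑g : Matrix (Fin 2) (Fin 2) (ZMod (p ^ c))) 1 0 = (p : ZMod (p ^ c)) * x})
    (hU : (U : Set (Matrix.SpecialLinearGroup (Fin 2) (ZMod (p ^ c)))) =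
      {g : Matrix.SpecialLinearGroup (Fin 2) (ZMod (p ^ c)) | ∃ b : ZMod (p ^ c),
        (↑g : Matrix (Fin 2) (Fin 2) (ZMod (p ^ c))) = !![1, b; 0, 1]})
    (hV : (V : Set (Matrix.SpecialLinearGroup (Fin 2) (ZMod (p ^ c)))) =
      {g : Matrix.SpecialLinearGroup (Fin 2) (ZMod (p ^ c)) | ∃ c' : ZMod (p ^ c),
        (∃ c'' : ZMod (p ^ c), c' = (p : ZMod (p ^ c)) * c'') ∧
        (↑g : Matrix (Fin 2) (Fin 2) (ZMod (p ^ c))) = !![1, 0; c', 1]})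
    (hBJ : B ≤ Jsub) (hUJ : U ≤ Jsub) (hVJ : V ≤ Jsub)
    (ρh : ↥B →* ℂˣ)
    (hρh : ∀ (g : ↥B) (a : (ZMod (p ^ c))ˣ),
      (↑(↑g : Matrix.SpecialLinearGroup (Fin 2) (ZMod (p ^ c))) :
        Matrix (Fin 2) (Fin 2) (ZMod (p ^ c))) 0 0 = (a : ZMod (p ^ c)) → ρh g = ρ a) :
    dimC (M := ↥Jsub → ℂ)
        (indChar (B.subgroupOf Jsub)
          (ρh.comp (Subgroup.subgroupOfEquivOfLe hBJ).toMonoidHom)) = p ^ (c - 1) ∧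
    ∀ f ∈ indChar (B.subgroupOf Jsub)
        (ρh.comp (Subgroup.subgroupOfEquivOfLe hBJ).toMonoidHom),
      avgMap (rtRep ↥Jsub ℂ) (U.subgroupOf Jsub)
          (avgMap (rtRep ↥Jsub ℂ) (V.subgroupOf Jsub)
            (avgMap (rtRep ↥Jsub ℂ) (U.subgroupOf Jsub) f)) =
        ((p : ℂ) ^ ((1 : ℤ) - (c : ℤ))) •
          avgMap (rtRep ↥Jsub ℂ) (U.subgroupOf Jsub) f := by
  have hB' := Set.ext_iff.mp hB
  have hJ' := Set.ext_iff.mp hJ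
  have hU' := Set.ext_iff.mp hU
  have hV' := Set.ext_iff.mp hV
  set χ := ρh.comp (Subgroup.subgroupOfEquivOfLe hBJ).toMonoidHom
  have hχ (b : B.subgroupOf Jsub) (a : (ZMod (p ^ c))ˣ)
      (hba : (b : SL(2, ZMod (p ^ c))) 0 0 = a) : χ b = ρ a :=
    hρh _ a hba
  have hp : IsNilpotent (p : ZMod (p ^ c)) := ⟨c, by exact_mod_cast ZMod.natCast_self (p ^ c)⟩
  have hcompl := isComplement'_subgroupOf_iwahori hp hB' hJ' hV' hBJ hVJ
  have hcard := card_subgroupOf_lower hc hV' hVJ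
  refine ⟨by rw [dimC, finrank_indChar hcompl, hcard], fun f hf => ?_⟩
  rw [avgMap_avgMap_avgMap_eq_inv_card_smul hcompl
    (Subgroup.subgroupOf_mono Jsub (upper_le_borel hB' hU')) (subgroupOf_upper_le_ker hU' hχ)
    (exists_upper_mul_eq_borel_mul hc hB' hU' hV' hUJ hρ hχ) hf, hcard]
  congr 1
  rw [Nat.cast_pow, ← zpow_natCast, ← _root_.zpow_neg, Nat.cast_sub hc]
  congr 1
  push_cast
  ring

/-- Let `ρ` be a character of `(ℤ/p^cℤ)ˣ` of conductor exactly `c`, and let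
`π = Ind_B^J ρ̂` in the Iwahori subgroup `J` of `SL₂(ℤ/p^cℤ)`.  Then `dim π = p^{c-1}`,
and as operators on `π` one has `π(e_U)·π(e_V)·π(e_U) = p^{1-c}·π(e_U)`. -/
theorem indChar_dim_and_avg_identity
    (p c : ℕ) [Fact p.Prime] [NeZero (p ^ c)] (hc : 1 ≤ c)
    (ρ : (ZMod (p ^ c))ˣ →* ℂˣ)
    (hρ : ∃ x ∈ (ZMod.unitsMap (pow_dvd_pow p (Nat.sub_le c 1))).ker, ρ x ≠ 1)
    (B Jsub U V : Subgroup (Matrix.SpecialLinearGroup (Fin 2) (ZMod (p ^ c))))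
    (hB : (B : Set (Matrix.SpecialLinearGroup (Fin 2) (ZMod (p ^ c)))) =
      {g : Matrix.SpecialLinearGroup (Fin 2) (ZMod (p ^ c)) |
        (↑g : Matrix (Fin 2) (Fin 2) (ZMod (p ^ c))) 1 0 = 0})
    (hJ : (Jsub : Set (Matrix.SpecialLinearGroup (Fin 2) (ZMod (p ^ c)))) =
      {g : Matrix.SpecialLinearGroup (Fin 2) (ZMod (p ^ c)) | ∃ x : ZMod (p ^ c),
        (↑g : Matrix (Fin 2) (Fin 2) (ZMod (p ^ c))) 1 0 = (p : ZMod (p ^ c)) * x})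
    (hU : (U : Set (Matrix.SpecialLinearGroup (Fin 2) (ZMod (p ^ c)))) =
      {g : Matrix.SpecialLinearGroup (Fin 2) (ZMod (p ^ c)) | ∃ b : ZMod (p ^ c),
        (↑g : Matrix (Fin 2) (Fin 2) (ZMod (p ^ c))) = !![1, b; 0, 1]})
    (hV : (V : Set (Matrix.SpecialLinearGroup (Fin 2) (ZMod (p ^ c)))) =
      {g : Matrix.SpecialLinearGroup (Fin 2) (ZMod (p ^ c)) | ∃ c' : ZMod (p ^ c),
        (∃ c'' : ZMod (p ^ c), c' = (p : ZMod (p ^ c)) * c'') ∧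
        (↑g : Matrix (Fin 2) (Fin 2) (ZMod (p ^ c))) = !![1, 0; c', 1]})
    (hBJ : B ≤ Jsub) (hUJ : U ≤ Jsub) (hVJ : V ≤ Jsub)
    (ρh : ↥B →* ℂˣ)
    (hρh : ∀ (g : ↥B) (a : (ZMod (p ^ c))ˣ),
      (↑(↑g : Matrix.SpecialLinearGroup (Fin 2) (ZMod (p ^ c))) :
        Matrix (Fin 2) (Fin 2) (ZMod (p ^ c))) 0 0 = (a : ZMod (p ^ c)) → ρh g = ρ a) :
    dimC (M := ↥Jsub → ℂ)
        (indChar (B.subgroupOf Jsub)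
          (ρh.comp (Subgroup.subgroupOfEquivOfLe hBJ).toMonoidHom)) = p ^ (c - 1) ∧
    ∀ f ∈ indChar (B.subgroupOf Jsub)
        (ρh.comp (Subgroup.subgroupOfEquivOfLe hBJ).toMonoidHom),
      avgMap (rtRep ↥Jsub ℂ) (U.subgroupOf Jsub)
          (avgMap (rtRep ↥Jsub ℂ) (V.subgroupOf Jsub)
            (avgMap (rtRep ↥Jsub ℂ) (U.subgroupOf Jsub) f)) =
        ((p : ℂ) ^ ((1 : ℤ) - (c : ℤ))) •
          avgMap (rtRep ↥Jsub ℂ) (U.subgroupOf Jsub) f :=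
  indChar_dim_and_avg_identity_general p c hc ρ hρ B Jsub U V hB hJ hU hV hBJ hUJ hVJ ρh hρh

end Statement12


end Parahoric
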